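/- Let 0 < δ < ε be real numbers, m ∈ ℕ, and for ρ > 0 let V_ρ := (−1−ρ/2, 1+ρ/2)^m + i(−ρ/2, ρ/2)^m ⊆ ℂ^m. Let Hol_b(V_ρ, ℂ^m)_ℝ denote the real Banach space of bounded holomorphic maps V_ρ → ℂ^m mapping V_ρ ∩ ℝ^m into ℝ^m, with the supremum norm. Then the restriction map ρ : Hol_b(V_ε, ℂ^m)_ℝ → Hol_b(V_δ, ℂ^m)_ℝ, θ ↦ θ|_{V_δ}, is a compact operator. -/

import Mathlib

/-!
By the Schwarz lemma on balls of radius `(ε - δ) / 4`, maps bounded by `1` and holomorphic on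
`V_ε` are uniformly Lipschitz on the compact box `closedVset m ((δ + ε) / 2)`, which lies between
`V_δ` and `V_ε`; Arzelà–Ascoli then gives a subsequence converging uniformly there. On `V_δ` the
Cauchy estimate makes the derivatives converge uniformly as well, so the limit is holomorphic;
boundedness and realness pass to the limit because they are closed conditions.
-/

/-- `V_ρ = (−1−ρ/2, 1+ρ/2)^m + i(−ρ/2, ρ/2)^m ⊆ ℂ^m`, with `ℂ^m = Fin m → ℂ` and the
maximum norm. -/
def Vset (m : ℕ) (ρ : ℝ) : Set (Fin m → ℂ) :=
  {z | ∀ k, |(z k).re| < 1 + ρ / 2 ∧ |(z k).im| < ρ / 2}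

open Metric Set Filter Topology BoundedContinuousFunction
open scoped NNReal

def closedVset (m : ℕ) (ρ : ℝ) : Set (Fin m → ℂ) :=
  univ.pi fun _ => Icc (-(1 + ρ / 2)) (1 + ρ / 2) ×ℂ Icc (-(ρ / 2)) (ρ / 2)

lemma isOpen_Vset (m : ℕ) (ρ : ℝ) : IsOpen (Vset m ρ) := by
  have : Vset m ρ =
      univ.pi fun _ => Ioo (-(1 + ρ / 2)) (1 + ρ / 2) ×ℂ Ioo (-(ρ / 2)) (ρ / 2) := by
    ext z
    simp [Vset, Complex.mem_reProdIm, abs_lt]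
  rw [this]
  exact isOpen_set_pi finite_univ fun _ _ => isOpen_Ioo.reProdIm isOpen_Ioo

lemma isCompact_closedVset (m : ℕ) (ρ : ℝ) : IsCompact (closedVset m ρ) :=
  isCompact_univ_pi fun _ => isCompact_Icc.reProdIm isCompact_Icc

lemma Vset_subset_closedVset (m : ℕ) {a b : ℝ} (h : a ≤ b) : Vset m a ⊆ closedVset m b := by
  intro z hz k _
  obtain ⟨hre, him⟩ := hz k
  rw [abs_lt] at hre him
  simp only [Complex.mem_reProdIm, mem_Icc]
  constructor <;> constructor <;> linarith

lemma ball_subset_Vset {m : ℕ} {a b r : ℝ} {x : Fin m → ℂ} (hx : x ∈ closedVset m a)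
    (hab : a + 2 * r ≤ b) : ball x r ⊆ Vset m b := by
  intro y hy k
  have hk : ‖y k - x k‖ < r := (norm_le_pi_norm (y - x) k).trans_lt (mem_ball_iff_norm.1 hy)
  have hre := (Complex.abs_re_le_norm _).trans_lt hk
  have him := (Complex.abs_im_le_norm _).trans_lt hk
  obtain ⟨⟨hre₁, hre₂⟩, him₁, him₂⟩ := hx k (mem_univ k)
  rw [Complex.sub_re, abs_lt] at hre
  rw [Complex.sub_im, abs_lt] at him
  rw [abs_lt, abs_lt]
  constructor <;> constructor <;> linarith

section Holomorphic

variable {D E : Type*} [NormedAddCommGroup D] [NormedSpace ℂ D]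
  [NormedAddCommGroup E] [NormedSpace ℂ E]

-- Schwarz lemma on `ball y r ⊆ U` for close points, the trivial bound `2 * M` for far apart ones.
lemma lipschitzOnWith_of_norm_le_of_ball_subset {f : D → E} {U s : Set D} {M r : ℝ}
    (hr : 0 < r) (hf : DifferentiableOn ℂ f U) (hM : ∀ z ∈ U, ‖f z‖ ≤ M)
    (hs : ∀ x ∈ s, ball x r ⊆ U) : LipschitzOnWith (2 * M / r).toNNReal f s := by
  refine LipschitzOnWith.of_dist_le' fun x hx y hy => ?_
  have hfar : ∀ z ∈ U, dist (f z) (f y) ≤ 2 * M := fun z hz =>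
    (dist_le_norm_add_norm _ _).trans (by linarith [hM z hz, hM y (hs y hy (mem_ball_self hr))])
  rcases lt_or_ge (dist x y) r with hxy | hxy
  · exact Complex.dist_le_div_mul_dist_of_mapsTo_ball (hf.mono (hs y hy))
      (fun z hz => mem_closedBall.2 (hfar z (hs y hy hz))) hxy
  · have hM0 : 0 ≤ 2 * M := dist_nonneg.trans (hfar x (hs x hx (mem_ball_self hr)))
    calc dist (f x) (f y) ≤ 2 * M := hfar x (hs x hx (mem_ball_self hr))
      _ = 2 * M / r * r := by field_simp
      _ ≤ 2 * M / r * dist x y := by gcongr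

variable [CompleteSpace E]

/-- The derivatives are uniformly Cauchy on `ball x (r / 2)` by the Cauchy estimate for
`f i - f j` on balls of radius `r / 2`, so their limit is the derivative of `g`. -/
lemma differentiableAt_of_tendstoUniformlyOn_ball {f : ℕ → D → E} {g : D → E} {x : D} {r : ℝ}
    (hr : 0 < r) (hf : ∀ n, DifferentiableOn ℂ (f n) (ball x r))
    (hfg : TendstoUniformlyOn f g atTop (ball x r)) : DifferentiableAt ℂ g x := by
  have hball : ∀ y ∈ ball x (r / 2), ball y (r / 2) ⊆ ball x r := fun y hy =>
    ball_subset_ball' (by linarith [mem_ball.1 hy])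
  have hdiffAt : ∀ n, ∀ y ∈ ball x (r / 2), DifferentiableAt ℂ (f n) y := fun n y hy =>
    (hf n).differentiableAt (isOpen_ball.mem_nhds (hball y hy (mem_ball_self (half_pos hr))))
  have hCauchy : UniformCauchySeqOn (fun n => fderiv ℂ (f n)) atTop (ball x (r / 2)) := by
    rw [Metric.uniformCauchySeqOn_iff]
    intro η hη
    obtain ⟨N, hN⟩ := Metric.uniformCauchySeqOn_iff.1 hfg.uniformCauchySeqOn (η * r / 8)
      (by positivity)
    refine ⟨N, fun i hi j hj y hy => ?_⟩
    have hmaps : MapsTo (fun z => f i z - f j z) (ball y (r / 2))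
        (closedBall (f i y - f j y) (η * r / 4)) := fun z hz => by
      rw [mem_closedBall, dist_eq_norm]
      calc ‖f i z - f j z - (f i y - f j y)‖ ≤ ‖f i z - f j z‖ + ‖f i y - f j y‖ :=
            norm_sub_le _ _
        _ ≤ η * r / 8 + η * r / 8 := by
          rw [← dist_eq_norm, ← dist_eq_norm]
          exact add_le_add (hN i hi j hj z (hball y hy hz)).le
            (hN i hi j hj y (hball y hy (mem_ball_self (half_pos hr)))).le
        _ = η * r / 4 := by ring
    rw [dist_eq_norm, ← fderiv_sub (hdiffAt i y hy) (hdiffAt j y hy)]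
    calc ‖fderiv ℂ (fun z => f i z - f j z) y‖ ≤ η * r / 4 / (r / 2) :=
          Complex.norm_fderiv_le_div_of_mapsTo_ball
            (((hf i).sub (hf j)).mono (hball y hy)) hmaps (half_pos hr)
      _ = η / 2 := by field_simp; ring
      _ < η := half_lt_self hη
  have hlim : ∀ y ∈ ball x (r / 2), Tendsto (fun n => fderiv ℂ (f n) y) atTop
      (𝓝 (limUnder atTop fun n => fderiv ℂ (f n) y)) := fun y hy =>
    (hCauchy.cauchySeq hy).tendsto_limUnder
  exact (hasFDerivAt_of_tendstoUniformlyOn isOpen_ball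
    (hCauchy.tendstoUniformlyOn_of_tendsto hlim)
    (fun n y hy => (hdiffAt n y hy).hasFDerivAt)
    (fun y hy => hfg.tendsto_at (hball x (mem_ball_self (half_pos hr)) hy))
    (mem_ball_self (half_pos hr))).differentiableAt

lemma TendstoUniformlyOn.differentiableOn_of_isOpen {f : ℕ → D → E} {g : D → E} {U : Set D}
    (hU : IsOpen U) (hf : ∀ n, DifferentiableOn ℂ (f n) U)
    (hfg : TendstoUniformlyOn f g atTop U) : DifferentiableOn ℂ g U := fun x hx => by
  obtain ⟨r, hr, hxr⟩ := Metric.isOpen_iff.1 hU x hx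
  exact (differentiableAt_of_tendstoUniformlyOn_ball hr (fun n => (hf n).mono hxr)
    (hfg.mono hxr)).differentiableWithinAt

end Holomorphic

theorem exists_subseq_tendstoUniformlyOn_of_lipschitzOnWith {α β : Type*} [PseudoMetricSpace α]
    [MetricSpace β] {K : Set α} (hK : IsCompact K) {C : Set β} (hC : IsCompact C) {L : ℝ≥0}
    {f : ℕ → α → β} (hlip : ∀ n, LipschitzOnWith L (f n) K) (hmaps : ∀ n, MapsTo (f n) K C) :
    ∃ φ : ℕ → ℕ, ∃ g : α → β, StrictMono φ ∧ TendstoUniformlyOn (fun j => f (φ j)) g atTop K := by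
  have : CompactSpace K := isCompact_iff_compactSpace.mp hK
  let F : ℕ → K →ᵇ β := fun n =>
    mkOfCompact ⟨K.domRestrict (f n), (hlip n).continuousOn.domRestrict⟩
  have hequi : Equicontinuous ((↑) : range F → K → β) := by
    refine (LipschitzWith.uniformEquicontinuous _ L ?_).equicontinuous
    rintro ⟨_, n, rfl⟩
    exact (hlip n).to_restrict
  obtain ⟨G, -, φ, hφ, hconv⟩ := (arzela_ascoli C hC (range F)
    (by rintro _ x ⟨n, rfl⟩; exact hmaps n x.2) hequi).tendsto_subseq
    (fun n => subset_closure ⟨n, rfl⟩)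
  refine ⟨φ, Function.extend Subtype.val G (f 0), hφ, ?_⟩
  rw [tendstoUniformlyOn_iff_tendstoUniformly_comp_coe,
    Function.extend_comp Subtype.val_injective]
  exact tendsto_iff_tendstoUniformly.mp hconv

theorem holb_real_restriction_compact (m : ℕ) (δ ε : ℝ) (hδε : δ < ε)
    (θ : ℕ → (Fin m → ℂ) → (Fin m → ℂ))
    (hdiff : ∀ n, DifferentiableOn ℂ (θ n) (Vset m ε))
    (hbd : ∀ n, ∀ z ∈ Vset m ε, ‖θ n z‖ ≤ 1)
    (hreal : ∀ n, ∀ z ∈ Vset m ε, (∀ k, (z k).im = 0) → ∀ k, (θ n z k).im = 0) :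
    ∃ (φ : ℕ → ℕ) (g : (Fin m → ℂ) → (Fin m → ℂ)), StrictMono φ ∧
      DifferentiableOn ℂ g (Vset m δ) ∧
      (∀ z ∈ Vset m δ, ‖g z‖ ≤ 1) ∧
      (∀ z ∈ Vset m δ, (∀ k, (z k).im = 0) → ∀ k, (g z k).im = 0) ∧
      TendstoUniformlyOn (fun j => θ (φ j)) g Filter.atTop (Vset m δ) := by
  set K := closedVset m ((δ + ε) / 2)
  have hr : 0 < (ε - δ) / 4 := by linarith
  have hball : ∀ x ∈ K, ball x ((ε - δ) / 4) ⊆ Vset m ε := fun x hx =>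
    ball_subset_Vset hx (by linarith)
  have hKV : K ⊆ Vset m ε := fun x hx => hball x hx (mem_ball_self hr)
  have hVK : Vset m δ ⊆ K := Vset_subset_closedVset m (by linarith)
  obtain ⟨φ, g, hφ, hconv⟩ := exists_subseq_tendstoUniformlyOn_of_lipschitzOnWith
    (isCompact_closedVset m _) (isCompact_closedBall (0 : Fin m → ℂ) 1)
    (fun n => lipschitzOnWith_of_norm_le_of_ball_subset hr (hdiff n) (hbd n) hball)
    (fun n z hz => mem_closedBall_zero_iff.2 (hbd n z (hKV hz)))
  have hconvδ := hconv.mono hVK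
  have hlimit_mem : ∀ z ∈ Vset m δ, ∀ S : Set (Fin m → ℂ), IsClosed S →
      (∀ n, θ n z ∈ S) → g z ∈ S := fun z hz S hS hθ =>
    hS.mem_of_tendsto (hconvδ.tendsto_at hz) (Eventually.of_forall fun j => hθ (φ j))
  refine ⟨φ, g, hφ, hconvδ.differentiableOn_of_isOpen (isOpen_Vset m δ)
    (fun j => (hdiff (φ j)).mono (hVK.trans hKV)), fun z hz => ?_, fun z hz hzr k => ?_, hconvδ⟩
  · exact mem_closedBall_zero_iff.1 (hlimit_mem z hz _ isClosed_closedBall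
      fun n => mem_closedBall_zero_iff.2 (hbd n z (hKV (hVK hz))))
  · exact hlimit_mem z hz {w | (w k).im = 0}
      (isClosed_eq (Complex.continuous_im.comp (continuous_apply k)) continuous_const)
      fun n => hreal n z (hKV (hVK hz)) hzr k
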